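/- Let f = 2^N χ_{[0,2^{-N}]} for a positive integer N. Then the L log^r L norm of f over [0,1] is comparable to N^r (for fixed r > 0), while the Hilbert transform Hf satisfies |Hf(x)| ∼ 1/x for 2^{-N+2} ≤ x ≤ 1/2, so that ‖Hf‖_{L^{1,q}([0,1])} ≳ N^{1/q}. Consequently, if the Hilbert transform locally maps L log^r L to L^{1,q} then r ≥ 1/q. -/

import Mathlib

/-!
For `x > 2⁻ᴺ` the truncated integrals defining `H f (x)` are constant once `ε < x - 2⁻ᴺ`, so
`H f (x) = 2ᴺ log (x / (x - 2⁻ᴺ))`, which lies between `1 / x` and `1 / (x - 2⁻ᴺ)` because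
`1 - y⁻¹ ≤ log y ≤ y - 1`. Hence `t · |{|H f| > t} ∩ [0,1]| ≥ 1/4` for `t ∈ (1/2, 2ᴺ/2)`, and
integrating against `dt / t` gives `‖H f‖_{L^{1,q}} ≳ (N log 2)^{1/q}`.

The Luxemburg modular of `f` at `t` is `t⁻¹ log^r (2 + 2ᴺ / t)`, so the norm is the least `t` with
`log (2 + 2ᴺ / t) ≤ t^{1/r}`. Writing `t = u^r`, this gives `N log 2 ≤ u + r log u ≤ (1 + r) u`,
while `t = (2N)^r` is admissible; so the norm is comparable to `N^r`. A bound
`N^{1/q} ≲ N^r` for all `N` forces `1/q ≤ r`.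
-/
open MeasureTheory Set
open scoped ENNReal NNReal

/-- Luxemburg norm of `f` on `[0,1]` for the Young function `t ↦ t log^r(2+t)`. -/
noncomputable def llogrNorm (r : ℝ) (f : ℝ → ℝ) : ℝ :=
  sInf {t : ℝ | 0 < t ∧
    (∫⁻ x in Set.Icc (0 : ℝ) 1,
      ENNReal.ofReal (|f x| / t * (Real.log (2 + |f x| / t)) ^ r)) ≤ 1}

/-- The (principal value) Hilbert transform `Hf(x) = p.v. ∫ f(y)/(x-y) dy`. -/
noncomputable def pvHilbert (f : ℝ → ℝ) (x : ℝ) : ℝ :=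
  Filter.limUnder (nhdsWithin (0 : ℝ) (Set.Ioi 0))
    (fun ε : ℝ => ∫ y in {y : ℝ | ε < |x - y|}, f y / (x - y))

/-- The Lorentz `L^{1,q}` (quasi)norm via the distribution function. -/
noncomputable def L1qNorm (q : ℝ) (f : ℝ → ℝ) : ℝ≥0∞ :=
  (∫⁻ t in Set.Ioi (0 : ℝ),
      (ENNReal.ofReal t * volume {x : ℝ | t < |f x|}) ^ q * ENNReal.ofReal t⁻¹) ^ (1 / q)

/-- The test function `f = 2^N χ_{[0,2^{-N}]}`. -/
noncomputable def fTest (N : ℕ) : ℝ → ℝ :=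
  Set.indicator (Set.Icc (0 : ℝ) ((2 : ℝ) ^ N)⁻¹) fun _ => (2 : ℝ) ^ N

open Filter

theorem lintegral_Ioo_ofReal_inv {a b : ℝ} (ha : 0 < a) (hab : a ≤ b) :
    ∫⁻ t in Ioo a b, ENNReal.ofReal t⁻¹ = ENNReal.ofReal (Real.log (b / a)) := by
  have hb : 0 < b := ha.trans_le hab
  have hint : IntegrableOn (fun t : ℝ => t⁻¹) (Ioo a b) :=
    (ContinuousOn.integrableOn_Icc (continuousOn_inv₀.mono fun t ht =>
      (ha.trans_le ht.1).ne')).mono_set Ioo_subset_Icc_self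
  rw [← ofReal_integral_eq_lintegral_ofReal hint
      (ae_restrict_of_forall_mem measurableSet_Ioo fun t ht => inv_nonneg.2 (ha.trans ht.1).le),
    ← integral_Ioc_eq_integral_Ioo, ← intervalIntegral.integral_of_le hab,
    integral_inv_of_pos ha hb]

theorem le_L1qNorm_of_forall_mem_Ioo {q t₁ t₂ : ℝ} (hq : 0 < q) (ht₁ : 0 < t₁) (ht : t₁ ≤ t₂)
    {g : ℝ → ℝ} {c : ℝ≥0∞}
    (hc : ∀ t ∈ Ioo t₁ t₂, c ≤ ENNReal.ofReal t * volume {x | t < |g x|}) :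
    c * ENNReal.ofReal (Real.log (t₂ / t₁)) ^ (1 / q) ≤ L1qNorm q g := by
  have hq' : 0 ≤ 1 / q := by positivity
  have key : c ^ q * ENNReal.ofReal (Real.log (t₂ / t₁)) ≤
      ∫⁻ t in Ioi (0 : ℝ), (ENNReal.ofReal t * volume {x | t < |g x|}) ^ q *
        ENNReal.ofReal t⁻¹ :=
    calc c ^ q * ENNReal.ofReal (Real.log (t₂ / t₁))
        = ∫⁻ t in Ioo t₁ t₂, c ^ q * ENNReal.ofReal t⁻¹ := by
          rw [lintegral_const_mul _ (by fun_prop), lintegral_Ioo_ofReal_inv ht₁ ht]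
      _ ≤ ∫⁻ t in Ioo t₁ t₂, (ENNReal.ofReal t * volume {x | t < |g x|}) ^ q *
            ENNReal.ofReal t⁻¹ :=
          setLIntegral_mono' measurableSet_Ioo fun t ht => by gcongr; exact hc t ht
      _ ≤ _ := lintegral_mono_set fun t ht => ht₁.trans ht.1
  calc c * ENNReal.ofReal (Real.log (t₂ / t₁)) ^ (1 / q)
      = (c ^ q * ENNReal.ofReal (Real.log (t₂ / t₁))) ^ (1 / q) := by
        rw [ENNReal.mul_rpow_of_nonneg _ _ hq', ← ENNReal.rpow_mul, mul_one_div_cancel hq.ne',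
          ENNReal.rpow_one]
    _ ≤ L1qNorm q g := ENNReal.rpow_le_rpow key hq'

theorem pvHilbert_indicator_Icc (c : ℝ) {a b x : ℝ} (hab : a ≤ b) (hx : b < x) :
    pvHilbert ((Icc a b).indicator fun _ => c) x = c * Real.log ((x - a) / (x - b)) := by
  have hxb : 0 < x - b := sub_pos.2 hx
  have htrunc : ∀ ε ∈ Ioo 0 (x - b),
      ∫ y in {y : ℝ | ε < |x - y|}, (Icc a b).indicator (fun _ => c) y / (x - y) =
        c * Real.log ((x - a) / (x - b)) := by
    intro ε hε
    have hsub : Icc a b ⊆ {y : ℝ | ε < |x - y|} := fun y hy => by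
      change ε < |x - y|
      rw [abs_of_pos (by linarith [hy.2])]
      linarith [hy.2, hε.2]
    have hind : (fun y => (Icc a b).indicator (fun _ => c) y / (x - y)) =
        (Icc a b).indicator fun y => c * (x - y)⁻¹ := by
      ext y; by_cases hy : y ∈ Icc a b <;> simp [hy, div_eq_mul_inv]
    rw [hind, integral_indicator measurableSet_Icc, Measure.restrict_restrict measurableSet_Icc,
      inter_eq_left.2 hsub, integral_Icc_eq_integral_Ioc, ← intervalIntegral.integral_of_le hab,
      intervalIntegral.integral_const_mul,
      intervalIntegral.integral_comp_sub_left (fun u : ℝ => u⁻¹) x,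
      integral_inv_of_pos hxb (by linarith)]
  exact (tendsto_const_nhds.congr' (eventuallyEq_of_mem
    (Ioo_mem_nhdsGT hxb) fun ε hε => (htrunc ε hε).symm)).limUnder_eq

theorem pvHilbert_fTest_bounds (N : ℕ) {x : ℝ} (hx : ((2 : ℝ) ^ N)⁻¹ < x) :
    1 / x ≤ pvHilbert (fTest N) x ∧ pvHilbert (fTest N) x ≤ 1 / (x - ((2 : ℝ) ^ N)⁻¹) := by
  set a : ℝ := ((2 : ℝ) ^ N)⁻¹
  have ha : 0 < a := by positivity
  have hxa : 0 < x - a := sub_pos.2 hx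
  have hx0 : 0 < x := ha.trans hx
  have hy : 0 < (x - 0) / (x - a) := by rw [sub_zero]; positivity
  have h2a : (2 : ℝ) ^ N * a = 1 := mul_inv_cancel₀ (by positivity)
  rw [fTest, pvHilbert_indicator_Icc _ ha.le hx]
  clear_value a
  constructor
  · calc 1 / x = 2 ^ N * (a / x) := by rw [← mul_div_assoc, h2a]
      _ = 2 ^ N * (1 - ((x - 0) / (x - a))⁻¹) := by
          rw [sub_zero, inv_div, one_sub_div hx0.ne', sub_sub_cancel]
      _ ≤ _ := by gcongr; exact Real.one_sub_inv_le_log_of_pos hy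
  · calc _ ≤ (2 : ℝ) ^ N * ((x - 0) / (x - a) - 1) := by
          gcongr; exact Real.log_le_sub_one_of_pos hy
      _ = 2 ^ N * (a / (x - a)) := by rw [sub_zero, div_sub_one hxa.ne', sub_sub_cancel]
      _ = 1 / (x - a) := by rw [← mul_div_assoc, h2a]

theorem abs_pvHilbert_fTest_bounds (N : ℕ) {x : ℝ} (hx : 2 / (2 : ℝ) ^ N ≤ x) :
    1 / x ≤ |pvHilbert (fTest N) x| ∧ |pvHilbert (fTest N) x| ≤ 2 / x := by
  have ha : 0 < ((2 : ℝ) ^ N)⁻¹ := by positivity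
  have h2a : 2 * ((2 : ℝ) ^ N)⁻¹ ≤ x := by rwa [← div_eq_mul_inv]
  have hx0 : 0 < x := by linarith
  obtain ⟨hlo, hhi⟩ := pvHilbert_fTest_bounds N (by linarith : ((2 : ℝ) ^ N)⁻¹ < x)
  rw [abs_of_pos ((one_div_pos.2 hx0).trans_le hlo)]
  refine ⟨hlo, hhi.trans ?_⟩
  rw [div_le_div_iff₀ (by linarith) hx0]
  linarith

noncomputable def llogrModular (r : ℝ) (f : ℝ → ℝ) (t : ℝ) : ℝ≥0∞ :=
  ∫⁻ x in Icc (0 : ℝ) 1, ENNReal.ofReal (|f x| / t * Real.log (2 + |f x| / t) ^ r)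

theorem llogrNorm_le {r t : ℝ} {f : ℝ → ℝ} (ht : 0 < t) (h : llogrModular r f t ≤ 1) :
    llogrNorm r f ≤ t :=
  csInf_le ⟨0, fun _ hs => hs.1.le⟩ ⟨ht, h⟩

theorem le_llogrNorm {r m : ℝ} {f : ℝ → ℝ} (hne : ∃ t, 0 < t ∧ llogrModular r f t ≤ 1)
    (h : ∀ t, 0 < t → llogrModular r f t ≤ 1 → m ≤ t) : m ≤ llogrNorm r f :=
  le_csInf hne fun t ht => h t ht.1 ht.2

theorem llogrModular_indicator_Icc (r h : ℝ) {a t : ℝ} (ha : 0 ≤ a) (ha1 : a ≤ 1) :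
    llogrModular r ((Icc 0 a).indicator fun _ => h) t =
      ENNReal.ofReal (a * (|h| / t * Real.log (2 + |h| / t) ^ r)) := by
  have hind : (fun x => ENNReal.ofReal
        (|(Icc 0 a).indicator (fun _ => h) x| / t *
          Real.log (2 + |(Icc 0 a).indicator (fun _ => h) x| / t) ^ r)) =
      (Icc 0 a).indicator fun _ => ENNReal.ofReal (|h| / t * Real.log (2 + |h| / t) ^ r) := by
    ext x; by_cases hx : x ∈ Icc 0 a <;> simp [hx]
  rw [llogrModular, hind, lintegral_indicator measurableSet_Icc, setLIntegral_const,
    Measure.restrict_apply measurableSet_Icc, inter_eq_left.2 (Icc_subset_Icc le_rfl ha1),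
    Real.volume_Icc, sub_zero, mul_comm, ← ENNReal.ofReal_mul ha]

theorem llogrModular_fTest_le_one_iff (r : ℝ) (N : ℕ) {t : ℝ} (ht : 0 < t) :
    llogrModular r (fTest N) t ≤ 1 ↔ Real.log (2 + 2 ^ N / t) ^ r ≤ t := by
  have h2N : (0 : ℝ) < 2 ^ N := by positivity
  rw [fTest, llogrModular_indicator_Icc _ _ (inv_nonneg.2 h2N.le)
      (inv_le_one_of_one_le₀ (one_le_pow₀ one_le_two)), abs_of_pos h2N, ENNReal.ofReal_le_one,
    ← mul_assoc, ← mul_div_assoc, inv_mul_cancel₀ h2N.ne', one_div_mul_eq_div, div_le_one ht]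

theorem llogrModular_fTest_le_one {r : ℝ} (hr : 0 ≤ r) {N : ℕ} (hN : 1 ≤ N) :
    llogrModular r (fTest N) ((2 * N) ^ r) ≤ 1 := by
  have hN' : (1 : ℝ) ≤ N := by exact_mod_cast hN
  have ht : 1 ≤ (2 * (N : ℝ)) ^ r := Real.one_le_rpow (by linarith) hr
  have h2N : (2 : ℝ) ≤ 2 ^ N := le_self_pow₀ one_le_two (by omega)
  have hdiv : 0 ≤ 2 ^ N / (2 * (N : ℝ)) ^ r := by positivity
  rw [llogrModular_fTest_le_one_iff _ _ (by linarith)]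
  have hlog : Real.log (2 + 2 ^ N / (2 * (N : ℝ)) ^ r) ≤ 2 * N :=
    calc Real.log (2 + 2 ^ N / (2 * (N : ℝ)) ^ r) ≤ Real.log (2 ^ (N + 1)) := by
          gcongr
          rw [pow_succ]
          linarith [div_le_self (by positivity : (0 : ℝ) ≤ 2 ^ N) ht]
      _ = (N + 1) * Real.log 2 := by rw [Real.log_pow]; push_cast; ring
      _ ≤ 2 * N := by nlinarith [Real.log_two_lt_d9, Real.log_pos one_lt_two]
  exact Real.rpow_le_rpow (Real.log_nonneg (by linarith)) hlog hr

theorem llogrNorm_fTest_le {r : ℝ} (hr : 0 ≤ r) {N : ℕ} (hN : 1 ≤ N) :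
    llogrNorm r (fTest N) ≤ 2 ^ r * (N : ℝ) ^ r := by
  rw [← Real.mul_rpow zero_le_two (Nat.cast_nonneg N)]
  exact llogrNorm_le (Real.rpow_pos_of_pos (by positivity) r) (llogrModular_fTest_le_one hr hN)

theorem rpow_le_of_log_two_add_div_rpow_le {r s t : ℝ} (hr : 0 < r) (hs : 1 ≤ s) (ht : 0 < t)
    (h : Real.log (2 + s / t) ^ r ≤ t) : (Real.log s / (1 + r)) ^ r ≤ t := by
  set u := t ^ r⁻¹
  have hu : 0 < u := Real.rpow_pos_of_pos ht _
  have hut : u ^ r = t := Real.rpow_inv_rpow ht.le hr.ne'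
  have hst : 0 < s / t := by positivity
  have hL : Real.log (2 + s / t) ≤ u := by
    rw [← Real.rpow_le_rpow_iff (Real.log_nonneg (by linarith)) hu.le hr, hut]
    exact h
  have hlogt : Real.log t = r * Real.log u := by rw [← hut, Real.log_rpow hu]
  have hlogs : Real.log s ≤ (1 + r) * u :=
    calc Real.log s = Real.log (s / t) + Real.log t := by
          rw [Real.log_div (by positivity) ht.ne', sub_add_cancel]
      _ ≤ Real.log (2 + s / t) + r * (u - 1) := by
          rw [hlogt]
          gcongr
          · linarith
          · exact Real.log_le_sub_one_of_pos hu
      _ ≤ (1 + r) * u := by nlinarith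
  rw [← hut]
  exact Real.rpow_le_rpow (div_nonneg (Real.log_nonneg hs) (by positivity))
    ((div_le_iff₀' (by positivity)).2 hlogs) hr.le

theorem le_llogrNorm_fTest {r : ℝ} (hr : 0 < r) {N : ℕ} (hN : 1 ≤ N) :
    (Real.log 2 / (1 + r)) ^ r * (N : ℝ) ^ r ≤ llogrNorm r (fTest N) := by
  have h2N : (1 : ℝ) ≤ 2 ^ N := one_le_pow₀ one_le_two
  rw [← Real.mul_rpow (by positivity) (Nat.cast_nonneg N), div_mul_eq_mul_div, mul_comm,
    ← Real.log_pow]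
  refine le_llogrNorm ⟨_, Real.rpow_pos_of_pos (by positivity) r,
    llogrModular_fTest_le_one hr.le hN⟩ fun t ht hmod => ?_
  exact rpow_le_of_log_two_add_div_rpow_le hr h2N ht ((llogrModular_fTest_le_one_iff r N ht).1 hmod)

theorem le_L1qNorm_pvHilbert_fTest {q : ℝ} (hq : 1 ≤ q) {N : ℕ} (hN : 1 ≤ N) :
    ENNReal.ofReal (8⁻¹ * (N : ℝ) ^ (1 / q)) ≤
      L1qNorm q ((Icc (0 : ℝ) 1).indicator (pvHilbert (fTest N))) := by
  have hq0 : 0 < q := one_pos.trans_le hq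
  have h2N : (2 : ℝ) ≤ 2 ^ N := le_self_pow₀ one_le_two (by omega)
  set a : ℝ := ((2 : ℝ) ^ N)⁻¹
  have ha : 0 < a := by positivity
  have h2a : (2 : ℝ) ^ N * a = 1 := mul_inv_cancel₀ (by positivity)
  have hlevel : ∀ t ∈ Ioo (1 / 2 : ℝ) (2 ^ N / 2), ENNReal.ofReal 4⁻¹ ≤
      ENNReal.ofReal t *
        volume {x | t < |(Icc (0 : ℝ) 1).indicator (pvHilbert (fTest N)) x|} := by
    rintro t ⟨ht₁, ht₂⟩
    have ht : 0 < t := by linarith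
    have hsub : Ioo a (min 1 t⁻¹) ⊆
        {x | t < |(Icc (0 : ℝ) 1).indicator (pvHilbert (fTest N)) x|} := by
      intro x hx
      obtain ⟨hax, hx⟩ := hx
      have hx0 : 0 < x := ha.trans hax
      change t < _
      rw [indicator_of_mem (show x ∈ Icc (0 : ℝ) 1 from
        ⟨hx0.le, (hx.trans_le (min_le_left _ _)).le⟩)]
      calc t < 1 / x := by
            rw [one_div, lt_inv_comm₀ ht hx0]; exact hx.trans_le (min_le_right _ _)
        _ ≤ pvHilbert (fTest N) x := (pvHilbert_fTest_bounds N hax).1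
        _ ≤ _ := le_abs_self _
    have hmass : 4⁻¹ ≤ t * (min 1 t⁻¹ - a) := by
      rcases le_total t 1 with h1 | h1
      · rw [min_eq_left (one_le_inv₀ ht |>.2 h1)]
        nlinarith
      · rw [min_eq_right (inv_le_one_of_one_le₀ h1), mul_sub, mul_inv_cancel₀ ht.ne']
        nlinarith
    calc ENNReal.ofReal 4⁻¹ ≤ ENNReal.ofReal t * ENNReal.ofReal (min 1 t⁻¹ - a) := by
          rw [← ENNReal.ofReal_mul ht.le]; exact ENNReal.ofReal_le_ofReal hmass
      _ = ENNReal.ofReal t * volume (Ioo a (min 1 t⁻¹)) := by rw [Real.volume_Ioo]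
      _ ≤ _ := by gcongr
  have hL := le_L1qNorm_of_forall_mem_Ioo hq0 (by norm_num) (by linarith) hlevel
  rw [div_div_div_cancel_right₀ two_ne_zero, div_one, Real.log_pow] at hL
  refine le_trans ?_ hL
  have hlog2 : (2 : ℝ)⁻¹ ≤ Real.log 2 := by linarith [Real.log_two_gt_d9]
  have hpow : (2 : ℝ)⁻¹ ≤ Real.log 2 ^ (1 / q) :=
    calc (2 : ℝ)⁻¹ ≤ Real.log 2 ^ (1 : ℝ) := by rwa [Real.rpow_one]
      _ ≤ Real.log 2 ^ (1 / q) := Real.rpow_le_rpow_of_exponent_ge (Real.log_pos one_lt_two)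
          (by linarith [Real.log_two_lt_d9]) (by rw [div_le_one hq0]; exact hq)
  rw [ENNReal.ofReal_rpow_of_nonneg (by positivity) (by positivity), ← ENNReal.ofReal_mul
    (by norm_num), Real.mul_rpow (Nat.cast_nonneg N) (Real.log_nonneg one_le_two)]
  apply ENNReal.ofReal_le_ofReal
  nlinarith [Real.rpow_nonneg (Nat.cast_nonneg N) (1 / q)]

theorem le_of_natCast_rpow_le_mul_rpow {a b K : ℝ}
    (h : ∀ N : ℕ, 1 ≤ N → (N : ℝ) ^ a ≤ K * (N : ℝ) ^ b) : a ≤ b := by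
  by_contra! hab
  have hlim : Tendsto (fun N : ℕ => (N : ℝ) ^ (a - b)) atTop atTop :=
    (tendsto_rpow_atTop (sub_pos.2 hab)).comp tendsto_natCast_atTop_atTop
  obtain ⟨N, hK, hN⟩ := ((hlim.eventually_gt_atTop K).and (eventually_ge_atTop 1)).exists
  have hN0 : (0 : ℝ) < N := by exact_mod_cast hN
  have := h N hN
  rw [← sub_add_cancel a b, Real.rpow_add hN0] at this
  nlinarith [Real.rpow_pos_of_pos hN0 b]

theorem measurable_fTest (N : ℕ) : Measurable (fTest N) :=
  measurable_const.indicator measurableSet_Icc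

theorem support_fTest_subset (N : ℕ) : Function.support (fTest N) ⊆ Icc 0 1 :=
  support_indicator_subset.trans
    (Icc_subset_Icc le_rfl (inv_le_one_of_one_le₀ (one_le_pow₀ one_le_two)))

/-- For `f = 2^N χ_{[0,2^{-N}]}`: `‖f‖_{L log^r L[0,1]} ∼ N^r`, `|Hf(x)| ∼ 1/x` for
`2^{-N+2} ≤ x ≤ 1/2`, `‖Hf‖_{L^{1,q}([0,1])} ≳ N^{1/q}`; consequently if the Hilbert transform
locally maps `L log^r L` to `L^{1,q}` then `r ≥ 1/q`. -/
theorem stmt_14 (r q : ℝ) (hr : 0 < r) (hq : 1 ≤ q) :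
    (∃ C : ℝ, 0 < C ∧ ∀ N : ℕ, 1 ≤ N →
      (C⁻¹ * (N : ℝ) ^ r ≤ llogrNorm r (fTest N) ∧
        llogrNorm r (fTest N) ≤ C * (N : ℝ) ^ r) ∧
      (∀ x : ℝ, 4 / (2 : ℝ) ^ N ≤ x → x ≤ 1 / 2 →
        C⁻¹ / x ≤ |pvHilbert (fTest N) x| ∧ |pvHilbert (fTest N) x| ≤ C / x) ∧
      ENNReal.ofReal (C⁻¹ * (N : ℝ) ^ (1 / q)) ≤
        L1qNorm q (Set.indicator (Set.Icc (0 : ℝ) 1) (pvHilbert (fTest N)))) ∧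
    ((∃ C' : ℝ, 0 < C' ∧ ∀ f : ℝ → ℝ, Measurable f → Function.support f ⊆ Set.Icc (0 : ℝ) 1 →
        L1qNorm q (Set.indicator (Set.Icc (0 : ℝ) 1) (pvHilbert f)) ≤
          ENNReal.ofReal (C' * llogrNorm r f)) →
      1 / q ≤ r) := by
  set C : ℝ := 8 + 2 ^ r + ((1 + r) / Real.log 2) ^ r
  have hA : 0 < ((1 + r) / Real.log 2) ^ r :=
    Real.rpow_pos_of_pos (div_pos (by linarith) (Real.log_pos one_lt_two)) r
  have h2r : 0 < (2 : ℝ) ^ r := by positivity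
  have hC : 0 < C := by positivity
  have hC8 : C⁻¹ ≤ 8⁻¹ := inv_anti₀ (by norm_num) (by linarith)
  have hClog : C⁻¹ ≤ (Real.log 2 / (1 + r)) ^ r := by
    rw [← inv_div, Real.inv_rpow (by positivity)]
    exact inv_anti₀ hA (by linarith)
  refine ⟨⟨C, hC, fun N hN => ⟨⟨?_, ?_⟩, fun x hx _ => ?_, ?_⟩⟩, fun ⟨C', hC', hH⟩ => ?_⟩
  · exact (mul_le_mul_of_nonneg_right hClog (by positivity)).trans (le_llogrNorm_fTest hr hN)
  · exact (llogrNorm_fTest_le hr.le hN).trans (by gcongr; linarith)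
  · have hx0 : 0 < x := lt_of_lt_of_le (by positivity) hx
    obtain ⟨hlo, hhi⟩ := abs_pvHilbert_fTest_bounds N
      ((div_le_div_of_nonneg_right (by norm_num) (by positivity)).trans hx)
    exact ⟨le_trans (by gcongr; linarith) hlo, hhi.trans (by gcongr; linarith)⟩
  · exact (ENNReal.ofReal_le_ofReal (by gcongr)).trans (le_L1qNorm_pvHilbert_fTest hq hN)
  · refine le_of_natCast_rpow_le_mul_rpow (K := 8 * (C' * 2 ^ r)) fun N hN => ?_
    have hchain := (le_L1qNorm_pvHilbert_fTest hq hN).trans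
      ((hH _ (measurable_fTest N) (support_fTest_subset N)).trans
        (ENNReal.ofReal_le_ofReal
          (mul_le_mul_of_nonneg_left (llogrNorm_fTest_le hr.le hN) hC'.le)))
    rw [ENNReal.ofReal_le_ofReal_iff (by positivity)] at hchain
    linarith
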